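/- In the new code x_0, ..., x_{2p-1} of length n constructed from a cyclic Gray code, for every k the codeword x_{2p-1-k} equals the bitwise complement of x_k; i.e., the second half of the sequence is the complemented reversal of the first half. -/

import Mathlib

/-!
Write `b_k` for the prefix bit of `x_k` (the parity of `k`) and `j(k) = min(k, 2p-1-k)` for the
index of the Gray codeword it is built from. Then `x_k = (b_k, y_{j(k)} xor b_k)`. Reflecting
`k ↦ 2p-1-k` fixes `j(k)` and flips `b_k`, since `2p-1` is odd, so it complements every bit.
-/

/-- The new counting code of length `m+1` built from a cyclic Gray code
`y` on `m`-bit words: the Gray code followed by its reversal, with every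
codeword at an odd position bitwise complemented, and alternating prefix
bits `0,1,0,1,...` prepended. -/
def newCode (m : ℕ) (y : Fin (2^m) → Fin m → Bool) :
    Fin (2 * 2^m) → Fin (m+1) → Bool := fun k =>
  Fin.cons (decide (k.val % 2 = 1))
    (fun i =>
      let j : Fin (2^m) := ⟨min k.val (2 * 2^m - 1 - k.val), by
        have hk := k.isLt
        have h1 : 1 ≤ 2^m := Nat.one_le_two_pow
        omega⟩
      if k.val % 2 = 0 then y j i else !(y j i))

theorem Fin.val_rev_mod_two_eq_one_iff {p : ℕ} (k : Fin (2 * p)) :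
    (k.rev : ℕ) % 2 = 1 ↔ (k : ℕ) % 2 = 0 := by
  have := k.isLt
  rw [Fin.val_rev]
  omega

def foldIndex {p : ℕ} (k : Fin (2 * p)) : Fin p :=
  ⟨min k.val (2 * p - 1 - k.val), by omega⟩

@[simp]
theorem foldIndex_rev {p : ℕ} (k : Fin (2 * p)) : foldIndex k.rev = foldIndex k := by
  have := k.isLt
  ext
  simp only [foldIndex, Fin.val_rev]
  omega

namespace newCode

variable {m : ℕ} (y : Fin (2^m) → Fin m → Bool) (k : Fin (2 * 2^m))

theorem apply_zero : newCode m y k 0 = decide ((k : ℕ) % 2 = 1) := rfl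

theorem apply_succ (i : Fin m) :
    newCode m y k i.succ = (newCode m y k 0 ^^ y (foldIndex k) i) := by
  rcases Nat.mod_two_eq_zero_or_one k.val with h | h <;>
    simp [newCode, foldIndex, h]

theorem rev_apply_zero : newCode m y k.rev 0 = !newCode m y k 0 := by
  simp only [apply_zero, Fin.val_rev_mod_two_eq_one_iff]
  rcases Nat.mod_two_eq_zero_or_one k.val with h | h <;> simp [h]

theorem rev : newCode m y k.rev = fun i => !newCode m y k i := by
  funext i
  refine Fin.cases (rev_apply_zero y k) (fun i => ?_) i
  rw [apply_succ, apply_succ, rev_apply_zero, foldIndex_rev, Bool.not_xor]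

end newCode

/-- In the new code `x_0, ..., x_{2p-1}` built from a cyclic Gray
code, the codeword `x_{2p-1-k}` is the bitwise complement of `x_k` for every
`k`: the second half of the sequence is the complemented reversal of the first. -/
theorem newCode_half_complement (m : ℕ) (y : Fin (2^m) → Fin m → Bool) :
    ∀ k : Fin (2 * 2^m),
      newCode m y ⟨2 * 2^m - 1 - k.val, by
          have hk := k.isLt
          have h1 : 1 ≤ 2^m := Nat.one_le_two_pow
          omega⟩
        = fun i => !(newCode m y k i) := by
  intro k
  have hrev : (⟨2 * 2^m - 1 - k.val, by omega⟩ : Fin (2 * 2^m)) = k.rev := by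
    ext
    simp only [Fin.val_rev]
    omega
  rw [hrev, newCode.rev]
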